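/- Let n ≥ 1, g ≥ 2, and let A₁, …, A_g, B₁, …, B_g ∈ SO(2n+1) be matrices such that for every matrix M among them and all 1 ≤ i, j ≤ n: M_{2i−1,2j−1} = M_{2i,2j} and M_{2i,2j−1} = −M_{2i−1,2j}. Then the product of commutators ∏_{l=1}^{g} [A_l, B_l] is not a generic element of T. (This expresses that the sections s⁺_{ij}(x), for all 1 ≤ i, j ≤ n and all generators x, have no common zeros on the representation variety.) -/

import Mathlib

open Matrix Real

/-- Index `2i` (0-based; row `2i-1` in 1-based numbering) in `Fin (2n+1)`. -/
def ia {n : ℕ} (i : Fin n) : Fin (2*n+1) := ⟨2*i.val, by have := i.isLt; omega⟩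

/-- Index `2i+1` (0-based; row `2i` in 1-based numbering) in `Fin (2n+1)`. -/
def ib {n : ℕ} (i : Fin n) : Fin (2*n+1) := ⟨2*i.val+1, by have := i.isLt; omega⟩

/-- The last index `2n` in `Fin (2n+1)`. -/
def ilast (n : ℕ) : Fin (2*n+1) := ⟨2*n, by omega⟩

/-- Membership in SO(2n+1). -/
def SOodd (n : ℕ) (M : Matrix (Fin (2*n+1)) (Fin (2*n+1)) ℝ) : Prop :=
  M * Mᵀ = 1 ∧ M.det = 1

/-- The block-diagonal torus element `diag(R(θ₁), …, R(θₙ), 1)` of SO(2n+1). -/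
noncomputable def torusMat (n : ℕ) (θ : Fin n → ℝ) :
    Matrix (Fin (2*n+1)) (Fin (2*n+1)) ℝ :=
  Matrix.of fun r c =>
    if hr : r.val < 2*n then
      if c.val < 2*n then
        if r.val / 2 = c.val / 2 then
          if r.val % 2 = 0 then
            if c.val % 2 = 0 then Real.cos (θ ⟨r.val/2, by omega⟩)
            else -Real.sin (θ ⟨r.val/2, by omega⟩)
          else
            if c.val % 2 = 0 then Real.sin (θ ⟨r.val/2, by omega⟩)
            else Real.cos (θ ⟨r.val/2, by omega⟩)
        else 0
      else 0
    else if c.val < 2*n then 0 else 1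

/-- `(θ₁, …, θₙ)` is a generic torus element: its centralizer in SO(2n+1) is exactly
the torus, and the only `λ ∈ {-1,0,1}ⁿ` with `λ·θ ∈ 2πℤ` is `λ = 0`. -/
noncomputable def IsGeneric (n : ℕ) (θ : Fin n → ℝ) : Prop :=
  (∀ M, SOodd n M → M * torusMat n θ = torusMat n θ * M →
      ∃ φ : Fin n → ℝ, M = torusMat n φ) ∧
  (∀ lam : Fin n → ℤ, (∀ i, lam i = -1 ∨ lam i = 0 ∨ lam i = 1) →
      (∃ k : ℤ, ∑ i, (lam i : ℝ) * θ i = 2 * Real.pi * k) → ∀ i, lam i = 0)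

/-- Commutator of matrices: `[P,Q] = P Q P⁻¹ Q⁻¹`. -/
noncomputable def commMat (n : ℕ) (P Q : Matrix (Fin (2*n+1)) (Fin (2*n+1)) ℝ) :
    Matrix (Fin (2*n+1)) (Fin (2*n+1)) ℝ :=
  P * Q * P⁻¹ * Q⁻¹

/-! If the `2n × 2n` block of an orthogonal matrix is complex-linear, orthogonality forces the
matrix to fix the last basis vector, and then reading each `2 × 2` block `[[a, -b], [b, a]]` as
`a + b i` is multiplicative. The resulting complex determinant takes values in a commutative
monoid and is inverted by transposition, so it is `1` on every product of commutators. On the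
torus element `θ` it equals `exp (i (θ₁ + ⋯ + θₙ))`, and genericity with `λ = (1, …, 1)` says
precisely that this is not `1`. -/

section

variable {n : ℕ}

abbrev OddMat (n : ℕ) := Matrix (Fin (2*n+1)) (Fin (2*n+1)) ℝ

lemma ia_injective : Function.Injective (ia (n := n)) := by
  intro i j h; simp only [ia, Fin.mk.injEq] at h; exact Fin.ext (by omega)

lemma ib_injective : Function.Injective (ib (n := n)) := by
  intro i j h; simp only [ib, Fin.mk.injEq] at h; exact Fin.ext (by omega)

lemma ia_ne_ib (i j : Fin n) : ia i ≠ ib j := by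
  simp only [ia, ib, ne_eq, Fin.mk.injEq]; omega

lemma ia_ne_ilast (i : Fin n) : ia i ≠ ilast n := by
  simp only [ia, ilast, ne_eq, Fin.mk.injEq]; omega

lemma ib_ne_ilast (i : Fin n) : ib i ≠ ilast n := by
  simp only [ib, ilast, ne_eq, Fin.mk.injEq]; omega

lemma sum_eq_sum_ia_add_ib_add_ilast {β : Type*} [AddCommMonoid β] (f : Fin (2*n+1) → β) :
    ∑ c, f c = ∑ i : Fin n, (f (ia i) + f (ib i)) + f (ilast n) := by
  rw [← (finCongr (by ring : n*2+1 = 2*n+1)).sum_comp, Fin.sum_univ_castSucc,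
    ← finProdFinEquiv.sum_comp, Fintype.sum_prod_type]
  simp only [Fin.sum_univ_two]
  congr 1
  · congr! 3 <;> ext <;> simp [ia, ib, finProdFinEquiv, add_comm]
  · congr 1; ext; simp [ilast]

lemma mul_apply_eq_sum_ia_add_ib_add_ilast (M N : OddMat n) (r c : Fin (2*n+1)) :
    (M * N) r c = ∑ k : Fin n, (M r (ia k) * N (ia k) c + M r (ib k) * N (ib k) c)
      + M r (ilast n) * N (ilast n) c :=
  (Matrix.mul_apply).trans (sum_eq_sum_ia_add_ib_add_ilast _)

/-- Every `2 × 2` block of the upper-left `2n × 2n` part is `[[a, -b], [b, a]]`, i.e. that part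
commutes with the complex structure of the torus. -/
def IsComplexBlock (M : OddMat n) : Prop :=
  ∀ i j : Fin n, M (ia i) (ia j) = M (ib i) (ib j) ∧ M (ib i) (ia j) = -(M (ia i) (ib j))

structure IsComplexBlockDiag (M : OddMat n) : Prop where
  complex : IsComplexBlock M
  ia_ilast : ∀ i, M (ia i) (ilast n) = 0
  ib_ilast : ∀ i, M (ib i) (ilast n) = 0
  ilast_ia : ∀ i, M (ilast n) (ia i) = 0
  ilast_ib : ∀ i, M (ilast n) (ib i) = 0

lemma IsComplexBlock.transpose {M : OddMat n} (h : IsComplexBlock M) : IsComplexBlock Mᵀ :=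
  fun i j => ⟨(h j i).1, by simp only [Matrix.transpose_apply]; linarith [(h j i).2]⟩

/-- Rows `ia i` and `ib i` of an orthogonal complex-block matrix have the same norm and are
orthogonal inside the block, so their last entries `a`, `b` satisfy `a² = b²` and `a b = 0`. -/
lemma IsComplexBlock.ilast_eq_zero {M : OddMat n} (hM : IsComplexBlock M) (h : M * Mᵀ = 1)
    (i : Fin n) : M (ia i) (ilast n) = 0 ∧ M (ib i) (ilast n) = 0 := by
  have haa : (M * Mᵀ) (ia i) (ia i) = 1 := by rw [h, Matrix.one_apply_eq]
  have hbb : (M * Mᵀ) (ib i) (ib i) = 1 := by rw [h, Matrix.one_apply_eq]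
  have hba : (M * Mᵀ) (ib i) (ia i) = 0 := by rw [h, Matrix.one_apply_ne (ia_ne_ib i i).symm]
  simp only [mul_apply_eq_sum_ia_add_ib_add_ilast, Matrix.transpose_apply] at haa hbb hba
  have hnorm : ∑ k, (M (ib i) (ia k) * M (ib i) (ia k) + M (ib i) (ib k) * M (ib i) (ib k))
      = ∑ k, (M (ia i) (ia k) * M (ia i) (ia k) + M (ia i) (ib k) * M (ia i) (ib k)) := by
    refine Finset.sum_congr rfl fun k _ => ?_
    rw [(hM i k).2, ← (hM i k).1]; ring
  have hinner : ∑ k, (M (ib i) (ia k) * M (ia i) (ia k) + M (ib i) (ib k) * M (ia i) (ib k))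
      = 0 := by
    refine Finset.sum_eq_zero fun k _ => ?_
    rw [(hM i k).2, ← (hM i k).1]; ring
  set a := M (ia i) (ilast n)
  set b := M (ib i) (ilast n)
  have hsq : a * a = b * b := by linarith
  have hab : b * a = 0 := by linarith
  have ha : a = 0 := by
    have : (a * a) * (a * a) = 0 := by linear_combination (a * a) * hsq + (a * b) * hab
    exact mul_self_eq_zero.mp (mul_self_eq_zero.mp this)
  refine ⟨ha, mul_self_eq_zero.mp ?_⟩
  rw [← hsq, ha, mul_zero]

lemma IsComplexBlock.isComplexBlockDiag {M : OddMat n} (hM : IsComplexBlock M)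
    (h : M * Mᵀ = 1) : IsComplexBlockDiag M := by
  have h' : Mᵀ * Mᵀᵀ = 1 := by rw [Matrix.transpose_transpose]; exact mul_eq_one_comm.mp h
  exact ⟨hM, fun i => (hM.ilast_eq_zero h i).1, fun i => (hM.ilast_eq_zero h i).2,
    fun i => (hM.transpose.ilast_eq_zero h' i).1, fun i => (hM.transpose.ilast_eq_zero h' i).2⟩

namespace IsComplexBlockDiag

lemma transpose {M : OddMat n} (h : IsComplexBlockDiag M) : IsComplexBlockDiag Mᵀ :=
  ⟨h.complex.transpose, h.ilast_ia, h.ilast_ib, h.ia_ilast, h.ib_ilast⟩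

lemma one : IsComplexBlockDiag (1 : OddMat n) := by
  refine ⟨fun i j => ⟨?_, ?_⟩, fun i => Matrix.one_apply_ne (ia_ne_ilast i),
    fun i => Matrix.one_apply_ne (ib_ne_ilast i), fun i => Matrix.one_apply_ne (ia_ne_ilast i).symm,
    fun i => Matrix.one_apply_ne (ib_ne_ilast i).symm⟩
  · simp only [Matrix.one_apply, ia_injective.eq_iff, ib_injective.eq_iff]
  · rw [Matrix.one_apply_ne (ia_ne_ib j i).symm, Matrix.one_apply_ne (ia_ne_ib i j), neg_zero]

lemma mul {M N : OddMat n} (hM : IsComplexBlockDiag M) (hN : IsComplexBlockDiag N) :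
    IsComplexBlockDiag (M * N) := by
  refine ⟨fun i j => ⟨?_, ?_⟩, fun i => ?_, fun i => ?_, fun i => ?_, fun i => ?_⟩ <;>
    simp only [mul_apply_eq_sum_ia_add_ib_add_ilast, hM.ia_ilast, hM.ib_ilast, hM.ilast_ia,
      hM.ilast_ib, hN.ia_ilast, hN.ib_ilast, hN.ilast_ia, hN.ilast_ib, zero_mul, mul_zero,
      add_zero, Finset.sum_const_zero]
  · refine Finset.sum_congr rfl fun k _ => ?_
    rw [(hM.complex i k).1, (hM.complex i k).2, (hN.complex k j).1, (hN.complex k j).2]; ring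
  · rw [← Finset.sum_neg_distrib]
    refine Finset.sum_congr rfl fun k _ => ?_
    rw [(hM.complex i k).1, (hM.complex i k).2, (hN.complex k j).1, (hN.complex k j).2]; ring

end IsComplexBlockDiag

def toComplex (M : OddMat n) : Matrix (Fin n) (Fin n) ℂ :=
  Matrix.of fun i j => (M (ia i) (ia j) : ℂ) + (M (ib i) (ia j) : ℂ) * Complex.I

lemma toComplex_one : toComplex (1 : OddMat n) = 1 := by
  ext i j
  rw [toComplex, Matrix.of_apply, Matrix.one_apply_ne (ia_ne_ib j i).symm]
  simp only [Matrix.one_apply, ia_injective.eq_iff]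
  split_ifs <;> simp

lemma toComplex_mul {M : OddMat n} (hM : IsComplexBlockDiag M) (N : OddMat n) :
    toComplex (M * N) = toComplex M * toComplex N := by
  ext i j
  rw [Matrix.mul_apply]
  simp only [toComplex, Matrix.of_apply, mul_apply_eq_sum_ia_add_ib_add_ilast, hM.ia_ilast,
    hM.ib_ilast, zero_mul, add_zero]
  push_cast
  rw [Finset.sum_mul, ← Finset.sum_add_distrib]
  refine Finset.sum_congr rfl fun k _ => ?_
  rw [(hM.complex i k).1, (hM.complex i k).2]
  push_cast
  linear_combination (M (ia i) (ib k) * N (ib k) (ia j) : ℂ) * Complex.I_mul_I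

lemma det_toComplex_mul_det_toComplex_transpose {M : OddMat n} (hM : IsComplexBlockDiag M)
    (h : M * Mᵀ = 1) : (toComplex M).det * (toComplex Mᵀ).det = 1 := by
  rw [← Matrix.det_mul, ← toComplex_mul hM, h, toComplex_one, Matrix.det_one]

def complexDetOneSubmonoid (n : ℕ) : Submonoid (OddMat n) where
  carrier := {M | IsComplexBlockDiag M ∧ (toComplex M).det = 1}
  one_mem' := ⟨.one, by rw [toComplex_one, Matrix.det_one]⟩
  mul_mem' := fun {M N} hM hN =>
    ⟨hM.1.mul hN.1, by rw [toComplex_mul hM.1, Matrix.det_mul, hM.2, hN.2, one_mul]⟩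

lemma commMat_mem_complexDetOneSubmonoid {A B : OddMat n} (hA : SOodd n A) (hB : SOodd n B)
    (hAc : IsComplexBlock A) (hBc : IsComplexBlock B) :
    commMat n A B ∈ complexDetOneSubmonoid n := by
  have hA' := hAc.isComplexBlockDiag hA.1
  have hB' := hBc.isComplexBlockDiag hB.1
  rw [commMat, Matrix.inv_eq_right_inv hA.1, Matrix.inv_eq_right_inv hB.1]
  refine ⟨((hA'.mul hB').mul hA'.transpose).mul hB'.transpose, ?_⟩
  rw [toComplex_mul ((hA'.mul hB').mul hA'.transpose), toComplex_mul (hA'.mul hB'),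
    toComplex_mul hA', Matrix.det_mul, Matrix.det_mul, Matrix.det_mul]
  linear_combination ((toComplex B).det * (toComplex Bᵀ).det) *
      det_toComplex_mul_det_toComplex_transpose hA' hA.1 +
    det_toComplex_mul_det_toComplex_transpose hB' hB.1

lemma torusMat_ia_ia (θ : Fin n → ℝ) (i j : Fin n) :
    torusMat n θ (ia i) (ia j) = if i = j then Real.cos (θ i) else 0 := by
  have := i.isLt; have := j.isLt
  simp only [torusMat, Matrix.of_apply, ia]
  rw [dif_pos (by omega), if_pos (by omega)]
  by_cases h : i = j
  · subst h; simp
  · rw [if_neg (by simpa [Fin.ext_iff] using h), if_neg h]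

lemma torusMat_ib_ia (θ : Fin n → ℝ) (i j : Fin n) :
    torusMat n θ (ib i) (ia j) = if i = j then Real.sin (θ i) else 0 := by
  have := i.isLt; have := j.isLt
  simp only [torusMat, Matrix.of_apply, ia, ib]
  rw [dif_pos (by omega), if_pos (by omega)]
  by_cases h : i = j
  · subst h
    rw [if_pos (by omega), if_neg (by omega), if_pos (by omega), if_pos rfl]
    congr 3; omega
  · rw [if_neg (by rw [Fin.ext_iff] at h; omega), if_neg h]

lemma toComplex_torusMat (θ : Fin n → ℝ) :
    toComplex (torusMat n θ) = Matrix.diagonal fun i => Complex.exp (θ i * Complex.I) := by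
  ext i j
  simp only [toComplex, Matrix.of_apply, torusMat_ia_ia, torusMat_ib_ia, Matrix.diagonal_apply]
  split_ifs with h
  · rw [h, Complex.exp_mul_I, ← Complex.ofReal_cos, ← Complex.ofReal_sin]
  · simp

lemma IsGeneric.exp_sum_mul_I_ne_one (hn : 1 ≤ n) {θ : Fin n → ℝ} (h : IsGeneric n θ) :
    Complex.exp ((∑ i, θ i : ℝ) * Complex.I) ≠ 1 := by
  intro h1
  obtain ⟨k, hk⟩ := Complex.exp_eq_one_iff.mp h1
  have hsum : ∑ i, θ i = 2 * π * k := by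
    apply Complex.ofReal_injective
    apply mul_right_cancel₀ Complex.I_ne_zero
    push_cast at hk ⊢
    linear_combination hk
  have := h.2 (fun _ => 1) (fun _ => by simp) ⟨k, by simpa using hsum⟩ ⟨0, hn⟩
  exact one_ne_zero this

end

theorem stmt3_general (n g : ℕ) (hn : 1 ≤ n)
    (A B : Fin g → Matrix (Fin (2*n+1)) (Fin (2*n+1)) ℝ)
    (hSOA : ∀ l, SOodd n (A l)) (hSOB : ∀ l, SOodd n (B l))
    (hA : ∀ l (i j : Fin n),
      A l (ia i) (ia j) = A l (ib i) (ib j) ∧ A l (ib i) (ia j) = -(A l (ia i) (ib j)))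
    (hB : ∀ l (i j : Fin n),
      B l (ia i) (ia j) = B l (ib i) (ib j) ∧ B l (ib i) (ia j) = -(B l (ia i) (ib j)))
    (θ : Fin n → ℝ) (hgen : IsGeneric n θ) :
    ((List.finRange g).map (fun l => commMat n (A l) (B l))).prod ≠ torusMat n θ := by
  intro heq
  have hmem : torusMat n θ ∈ complexDetOneSubmonoid n := by
    rw [← heq]
    refine Submonoid.list_prod_mem _ fun M hM => ?_
    obtain ⟨l, -, rfl⟩ := List.mem_map.mp hM
    exact commMat_mem_complexDetOneSubmonoid (hSOA l) (hSOB l) (hA l) (hB l)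
  have hdet := hmem.2
  rw [toComplex_torusMat, Matrix.det_diagonal, ← Complex.exp_sum, ← Finset.sum_mul] at hdet
  exact hgen.exp_sum_mul_I_ne_one hn (by exact_mod_cast hdet)

theorem stmt3 (n g : ℕ) (hn : 1 ≤ n) (hg : 2 ≤ g)
    (A B : Fin g → Matrix (Fin (2*n+1)) (Fin (2*n+1)) ℝ)
    (hSOA : ∀ l, SOodd n (A l)) (hSOB : ∀ l, SOodd n (B l))
    (hA : ∀ l (i j : Fin n),
      A l (ia i) (ia j) = A l (ib i) (ib j) ∧ A l (ib i) (ia j) = -(A l (ia i) (ib j)))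
    (hB : ∀ l (i j : Fin n),
      B l (ia i) (ia j) = B l (ib i) (ib j) ∧ B l (ib i) (ia j) = -(B l (ia i) (ib j)))
    (θ : Fin n → ℝ) (hgen : IsGeneric n θ) :
    ((List.finRange g).map (fun l => commMat n (A l) (B l))).prod ≠ torusMat n θ :=
  stmt3_general n g hn A B hSOA hSOB hA hB θ hgen
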